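/- arXiv:1406.7089 — 3 statements merged into one kernel-verified Lean document; each statement's English description precedes it below -/
import Mathlib

section
/- For real numbers m, p, k with m, p > 0 and p > k > -m, if k(p - m - k) ≤ 0 then Γ(p)·Γ(m) ≤ Γ(p - k)·Γ(m + k). -/
/-! The hypothesis says exactly that `p` lies between `p - k` and `m + k`, and
`p + m = (p - k) + (m + k)`. So `(p, m)` is the less spread-out pair with the same sum, and
convexity of `log ∘ Γ` on `(0, ∞)` gives `log Γ p + log Γ m ≤ log Γ (p - k) + log Γ (m + k)`. -/

open Set

theorem Set.mem_uIcc_iff_sub_mul_sub_nonpos {α : Type*} [Ring α] [LinearOrder α]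
    [IsStrictOrderedRing α] {a b x : α} : x ∈ uIcc a b ↔ (x - a) * (x - b) ≤ 0 := by
  rw [mem_uIcc, mul_nonpos_iff, sub_nonneg, sub_nonpos, sub_nonneg, sub_nonpos]
  exact or_congr_right and_comm

theorem ConvexOn.map_add_map_sub_le {𝕜 E β : Type*} [Semiring 𝕜] [PartialOrder 𝕜]
    [AddCommGroup E] [Module 𝕜 E] [AddCommMonoid β] [PartialOrder β] [IsOrderedAddMonoid β]
    [Module 𝕜 β] {s : Set E} {f : E → β} (hf : ConvexOn 𝕜 s f) {a b x : E} (ha : a ∈ s)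
    (hb : b ∈ s) (hx : x ∈ segment 𝕜 a b) : f x + f (a + b - x) ≤ f a + f b := by
  obtain ⟨θ, ϑ, hθ, hϑ, hθϑ, rfl⟩ := hx
  have hswap : a + b - (θ • a + ϑ • b) = ϑ • a + θ • b := by
    rw [sub_eq_iff_eq_add, add_add_add_comm, ← add_smul, ← add_smul, add_comm ϑ, hθϑ,
      one_smul, one_smul]
  calc f (θ • a + ϑ • b) + f (a + b - (θ • a + ϑ • b))
      ≤ (θ • f a + ϑ • f b) + (ϑ • f a + θ • f b) := by
        rw [hswap]
        exact add_le_add (hf.2 ha hb hθ hϑ hθϑ) (hf.2 ha hb hϑ hθ (by rwa [add_comm]))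
    _ = f a + f b := by
        rw [add_add_add_comm, ← add_smul, ← add_smul, hθϑ, add_comm ϑ, hθϑ, one_smul, one_smul]

theorem Real.Gamma_mul_Gamma_add_sub_le {a b x : ℝ} (ha : 0 < a) (hb : 0 < b)
    (hx : x ∈ uIcc a b) : Gamma x * Gamma (a + b - x) ≤ Gamma a * Gamma b := by
  have hx₀ : 0 < x := (lt_min ha hb).trans_le hx.1
  have hx₁ : 0 < a + b - x := by linarith [min_add_max a b, lt_min ha hb, hx.2]
  have hlog := convexOn_log_Gamma.map_add_map_sub_le ha hb (segment_eq_uIcc a b ▸ hx)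
  simp only [Function.comp_apply] at hlog
  rwa [← log_mul (Gamma_pos_of_pos hx₀).ne' (Gamma_pos_of_pos hx₁).ne',
    ← log_mul (Gamma_pos_of_pos ha).ne' (Gamma_pos_of_pos hb).ne',
    log_le_log_iff (by positivity) (by positivity)] at hlog

theorem gamma_chebyshev_le_general (m p k : ℝ)
    (hkp : k < p) (hkm : -m < k) (h : k * (p - m - k) ≤ 0) :
    Real.Gamma p * Real.Gamma m ≤ Real.Gamma (p - k) * Real.Gamma (m + k) := by
  have hp : p ∈ uIcc (p - k) (m + k) := by
    rw [mem_uIcc_iff_sub_mul_sub_nonpos]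
    linarith
  simpa using Real.Gamma_mul_Gamma_add_sub_le (by linarith) (by linarith) hp

theorem gamma_chebyshev_le (m p k : ℝ) (hm : 0 < m) (hp : 0 < p)
    (hkp : k < p) (hkm : -m < k) (h : k * (p - m - k) ≤ 0) :
    Real.Gamma p * Real.Gamma m ≤ Real.Gamma (p - k) * Real.Gamma (m + k) :=
  gamma_chebyshev_le_general m p k hkp hkm h
end

section
/- Let n ≥ 3 be an integer, q real with 1 < q < n/(n-2), and define I(t) = (1-t²)^(n-q(n-2)) · ∫₀¹ (1 - r^(n-2))^q · r^(n-q(n-2)-1) / (1 - r²t²)^(n-q(n-2)+1) dr for 0 ≤ t < 1. Then I(t) ≤ I(0) for all t ∈ [0,1). -/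
/-!
Write α = n - q(n - 2) > 0 and substitute r = s / √(1 - t²(1 - s²)) in I(t). Since
1 - r²t² = (1 - t²) / (1 - t²(1 - s²)), the Jacobian and the prefactor (1 - t²)^α combine into
I(t) = ∫₀¹ (1 - r(s)^(n-2))^q s^(α-1) (1 - t²(1 - s²))^(α/2) ds.
The substitution fixes 0 and 1 and satisfies r(s) ≥ s, and the last factor is at most 1, so the
integrand is pointwise at most (1 - s^(n-2))^q s^(α-1), the integrand of I(0).
-/

open MeasureTheory Set Real

noncomputable def substWeight (t s : ℝ) : ℝ := 1 - t ^ 2 * (1 - s ^ 2)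

noncomputable def substMap (t s : ℝ) : ℝ := s / √(substWeight t s)

section

variable {t s : ℝ}

lemma substWeight_pos (ht : t ^ 2 < 1) : 0 < substWeight t s := by
  unfold substWeight
  nlinarith [mul_nonneg (sq_nonneg t) (sq_nonneg s)]

lemma substWeight_le_one (hs : s ^ 2 ≤ 1) : substWeight t s ≤ 1 := by
  unfold substWeight
  nlinarith [sq_nonneg t]

@[simp] lemma substMap_zero_left (s : ℝ) : substMap 0 s = s := by
  simp [substMap, substWeight]

@[simp] lemma substWeight_zero_left (s : ℝ) : substWeight 0 s = 1 := by
  simp [substWeight]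

lemma substMap_zero (t : ℝ) : substMap t 0 = 0 := by simp [substMap]

lemma substMap_one (t : ℝ) : substMap t 1 = 1 := by simp [substMap, substWeight]

lemma hasDerivAt_substMap (ht : t ^ 2 < 1) (s : ℝ) :
    HasDerivAt (substMap t) ((1 - t ^ 2) / (substWeight t s * √(substWeight t s))) s := by
  have hw := substWeight_pos (s := s) ht
  have hw' : HasDerivAt (substWeight t) (2 * s * t ^ 2) s := by
    refine (((hasDerivAt_pow 2 s).const_sub 1).const_mul (t ^ 2) |>.const_sub 1).congr_deriv ?_
    ring
  refine ((hasDerivAt_id' s).div (hw'.sqrt hw.ne') (sqrt_pos.2 hw).ne').congr_deriv ?_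
  have hsq := sq_sqrt hw.le
  field_simp
  simp only [substWeight] at hsq ⊢
  linear_combination (s ^ 2 * t ^ 2) * hsq

lemma substMap_mem_Icc (ht : t ^ 2 < 1) (hs : s ∈ Icc (0 : ℝ) 1) :
    substMap t s ∈ Icc (0 : ℝ) 1 := by
  have hw := substWeight_pos (s := s) ht
  refine ⟨div_nonneg hs.1 (sqrt_nonneg _), div_le_one_of_le₀ ?_ (sqrt_nonneg _)⟩
  refine le_sqrt_of_sq_le ?_
  unfold substWeight
  nlinarith [mul_nonneg (sub_nonneg.2 ht.le) (sub_nonneg.2 (pow_le_one₀ hs.1 hs.2 : s ^ 2 ≤ 1))]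

lemma le_substMap (ht : t ^ 2 < 1) (hs : s ∈ Icc (0 : ℝ) 1) : s ≤ substMap t s := by
  have hw := substWeight_pos (s := s) ht
  rw [substMap, le_div_iff₀ (sqrt_pos.2 hw)]
  calc s * √(substWeight t s) ≤ s * 1 := by
        gcongr
        · exact hs.1
        exact sqrt_le_one.2 (substWeight_le_one (pow_le_one₀ hs.1 hs.2))
    _ = s := mul_one s

lemma one_sub_substMap_sq_mul (ht : t ^ 2 < 1) :
    1 - substMap t s ^ 2 * t ^ 2 = (1 - t ^ 2) / substWeight t s := by
  have hw := substWeight_pos (s := s) ht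
  rw [substMap, div_pow, sq_sqrt hw.le]
  field_simp
  simp only [substWeight]
  ring

lemma jacobian_identity_substMap (ht : t ^ 2 < 1) (hs : 0 < s) (α : ℝ) :
    (1 - t ^ 2) ^ α * ((1 - t ^ 2) / (substWeight t s * √(substWeight t s)) *
      (substMap t s ^ (α - 1) / (1 - substMap t s ^ 2 * t ^ 2) ^ (α + 1))) =
      s ^ (α - 1) * substWeight t s ^ (α / 2) := by
  have hw := substWeight_pos (s := s) ht
  have ha : 0 < 1 - t ^ 2 := sub_pos.2 ht
  set w := substWeight t s
  have hsqrt : √w ^ (α - 1) = w ^ ((α - 1) / 2) := by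
    rw [sqrt_eq_rpow, ← rpow_mul hw.le]; ring_nf
  have hsplit : w ^ (α + 1) = w * √w * w ^ ((α - 1) / 2) * w ^ (α / 2) := by
    rw [sqrt_eq_rpow, ← rpow_one_add' hw.le (by positivity), ← rpow_add hw, ← rpow_add hw]
    ring_nf
  rw [one_sub_substMap_sq_mul ht, substMap, div_rpow hs.le (sqrt_nonneg _), div_rpow ha.le hw.le,
    rpow_add_one ha.ne', hsqrt, hsplit]
  have := rpow_pos_of_pos hw ((α - 1) / 2)
  have := rpow_pos_of_pos hw (α / 2)
  have := rpow_pos_of_pos ha α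
  have := sqrt_pos.2 hw
  field_simp

lemma integral_comp_substMap_eq (ht : t ^ 2 < 1) (f : ℝ → ℝ) (α : ℝ) :
    (1 - t ^ 2) ^ α * ∫ r in (0 : ℝ)..1, f r * r ^ (α - 1) / (1 - r ^ 2 * t ^ 2) ^ (α + 1) =
      ∫ s in (0 : ℝ)..1, f (substMap t s) * s ^ (α - 1) * substWeight t s ^ (α / 2) := by
  have hderiv := hasDerivAt_substMap ht
  have hcov := integral_Icc_deriv_smul_of_deriv_nonneg
    (g := fun r => f r * r ^ (α - 1) / (1 - r ^ 2 * t ^ 2) ^ (α + 1))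
    (fun s _ => (hderiv s).continuousAt.continuousWithinAt) (fun s _ => hderiv s)
    (fun s _ => by have := substWeight_pos (s := s) ht; have := sub_pos.2 ht; positivity)
    zero_le_one
  rw [substMap_zero, substMap_one] at hcov
  rw [intervalIntegral.integral_of_le zero_le_one, intervalIntegral.integral_of_le zero_le_one,
    ← integral_Icc_eq_integral_Ioc, ← hcov, ← integral_const_mul,
    integral_Icc_eq_integral_Ioc]
  refine setIntegral_congr_fun measurableSet_Ioc fun s hs => ?_
  rw [smul_eq_mul, mul_assoc _ (s ^ (α - 1)), ← jacobian_identity_substMap ht hs.1 α]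
  ring

lemma integral_comp_substMap_le {f : ℝ → ℝ} {α : ℝ} (ht : t ^ 2 < 1) (hα : 0 ≤ α)
    (hf : AntitoneOn f (Icc 0 1)) (hf₀ : ∀ r ∈ Icc (0 : ℝ) 1, 0 ≤ f r)
    (hfi : IntervalIntegrable (fun s => f s * s ^ (α - 1)) volume 0 1) :
    ∫ s in (0 : ℝ)..1, f (substMap t s) * s ^ (α - 1) * substWeight t s ^ (α / 2) ≤
      ∫ s in (0 : ℝ)..1, f s * s ^ (α - 1) := by
  rw [intervalIntegral.integral_of_le zero_le_one, intervalIntegral.integral_of_le zero_le_one]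
  refine integral_mono_of_nonneg ?_ hfi.1 ?_ <;>
    filter_upwards [ae_restrict_mem measurableSet_Ioc] with s hs
  all_goals
    have hs' : s ∈ Icc (0 : ℝ) 1 := Ioc_subset_Icc_self hs
    have hw := substWeight_pos (s := s) ht
    have hφ₀ := hf₀ _ (substMap_mem_Icc ht hs')
    have hpow := rpow_nonneg hs'.1 (α - 1)
  · positivity
  · calc f (substMap t s) * s ^ (α - 1) * substWeight t s ^ (α / 2)
        ≤ f (substMap t s) * s ^ (α - 1) * 1 := by
          gcongr
          exact rpow_le_one hw.le (substWeight_le_one (pow_le_one₀ hs'.1 hs'.2)) (by positivity)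
      _ ≤ f s * s ^ (α - 1) := by
          rw [mul_one]
          gcongr
          exact hf hs' (substMap_mem_Icc ht hs') (le_substMap ht hs')

end

section

variable {m q : ℝ}

lemma one_sub_rpow_rpow_mem_Icc (hm : 0 ≤ m) (hq : 0 ≤ q) {r : ℝ}
    (hr : r ∈ Icc (0 : ℝ) 1) :
    (1 - r ^ m) ^ q ∈ Icc (0 : ℝ) 1 := by
  have h₀ := rpow_nonneg hr.1 m
  have h₁ := rpow_le_one hr.1 hr.2 hm
  exact ⟨rpow_nonneg (by linarith) q, rpow_le_one (by linarith) (by linarith) hq⟩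

lemma antitoneOn_one_sub_rpow_rpow (hm : 0 ≤ m) (hq : 0 ≤ q) :
    AntitoneOn (fun r : ℝ => (1 - r ^ m) ^ q) (Icc 0 1) := fun r hr r' hr' hrr' => by
  have := rpow_le_one hr'.1 hr'.2 hm
  have := rpow_le_rpow hr.1 hrr' hm
  exact rpow_le_rpow (by linarith) (by linarith) hq

lemma intervalIntegrable_one_sub_rpow_rpow_mul_rpow (hm : 0 ≤ m) (hq : 0 ≤ q) {α : ℝ}
    (hα : 0 < α) :
    IntervalIntegrable (fun s : ℝ => (1 - s ^ m) ^ q * s ^ (α - 1)) volume 0 1 := by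
  rw [intervalIntegrable_iff_integrableOn_Ioc_of_le zero_le_one]
  refine Integrable.bdd_mul (c := 1) (intervalIntegral.intervalIntegrable_rpow' (by linarith)).1
    (by fun_prop) ?_
  filter_upwards [ae_restrict_mem measurableSet_Ioc] with s hs
  have := one_sub_rpow_rpow_mem_Icc hm hq (Ioc_subset_Icc_self hs)
  rw [norm_of_nonneg this.1]
  exact this.2

end

theorem main_lemma_max_at_zero (n : ℕ) (hn : 3 ≤ n) (q : ℝ) (hq1 : 1 < q)
    (hq2 : q < n / ((n : ℝ) - 2)) (I : ℝ → ℝ)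
    (hI : ∀ t : ℝ, 0 ≤ t → t < 1 → I t =
      (1 - t ^ 2) ^ ((n : ℝ) - q * ((n : ℝ) - 2)) *
        ∫ r in (0:ℝ)..1,
          (1 - r ^ ((n : ℝ) - 2)) ^ q * r ^ ((n : ℝ) - q * ((n : ℝ) - 2) - 1) /
            (1 - r ^ 2 * t ^ 2) ^ ((n : ℝ) - q * ((n : ℝ) - 2) + 1))
    (t : ℝ) (ht : t ∈ Set.Ico (0:ℝ) 1) : I t ≤ I 0 := by
  have hm : 0 < (n : ℝ) - 2 := by
    have : (3 : ℝ) ≤ n := by exact_mod_cast hn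
    linarith
  have hα : 0 < (n : ℝ) - q * ((n : ℝ) - 2) := by
    rw [lt_div_iff₀ hm] at hq2
    linarith
  have hq : 0 ≤ q := by linarith
  have ht2 : t ^ 2 < 1 := by nlinarith [ht.1, ht.2]
  set α := (n : ℝ) - q * ((n : ℝ) - 2)
  calc I t = ∫ s in (0 : ℝ)..1,
        (1 - substMap t s ^ ((n : ℝ) - 2)) ^ q * s ^ (α - 1) * substWeight t s ^ (α / 2) := by
        rw [hI t ht.1 ht.2]
        exact integral_comp_substMap_eq ht2 (fun r => (1 - r ^ ((n : ℝ) - 2)) ^ q) α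
    _ ≤ ∫ s in (0 : ℝ)..1, (1 - s ^ ((n : ℝ) - 2)) ^ q * s ^ (α - 1) :=
        integral_comp_substMap_le ht2 hα.le (antitoneOn_one_sub_rpow_rpow hm.le hq)
          (fun r hr => (one_sub_rpow_rpow_mem_Icc hm.le hq hr).1)
          (intervalIntegrable_one_sub_rpow_rpow_mul_rpow hm.le hq hα)
    _ = I 0 := by
        rw [hI 0 le_rfl zero_lt_one, integral_comp_substMap_eq (by norm_num)
          (fun r => (1 - r ^ ((n : ℝ) - 2)) ^ q)]
        simp
end

section
/- Let n ≥ 3 be an integer and q real with 1 < q < n/(n-2); set a = n - q(n-2) ∈ (0,2). For each k ≥ 0, Γ(a/(n-2) + 2k/(n-2)) / Γ(2(k+n-1)/(n-2)) ≤ [Γ(2 + a/(n-2)) / Γ(2 + 2/(n-2))] · 1 / ((a+2k)/(n-2) · ((a+2k)/(n-2) + 1)). -/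
/-!
By the Bohr–Mollerup theorem `log ∘ Γ` is convex on `(0, ∞)`, and a convex function has
increasing increments: `f (x + K) - f x ≤ f (y + K) - f y` for `x ≤ y`, `K ≥ 0`. Exponentiating
gives `Γ(M) Γ(P) ≤ Γ(M - K) Γ(P + K)` whenever `M - K ≤ P`. Taking `M - K = 2 + a/(n-2)`,
`P = 2 + 2/(n-2)` and `K = 2k/(n-2)` (so `M - K ≤ P` is `a ≤ 2`), the factor `Γ(M)` equals
`s (s + 1) Γ(s)` with `s = (a + 2k)/(n-2)`, which is the claimed inequality.
-/

open Real Set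

variable {𝕜 : Type*} [Field 𝕜] [LinearOrder 𝕜] [IsStrictOrderedRing 𝕜]

theorem ConvexOn.map_add_add_map_le {s : Set 𝕜} {f : 𝕜 → 𝕜} (hf : ConvexOn 𝕜 s f) {x y K : 𝕜}
    (hx : x ∈ s) (hyK : y + K ∈ s) (hxy : x ≤ y) (hK : 0 ≤ K) :
    f (x + K) + f y ≤ f x + f (y + K) := by
  rcases eq_or_lt_of_le (show x ≤ y + K by linarith) with hxyK | hxyK
  · obtain rfl : K = 0 := by linarith
    obtain rfl : x = y := by linarith
    rw [add_zero, add_comm]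
  -- Both `x + K` and `y` are convex combinations of `x` and `y + K`, with swapped weights.
  set t := K / (y + K - x)
  have hD : 0 < y + K - x := by linarith
  have ht0 : 0 ≤ t := div_nonneg hK hD.le
  have ht1 : t ≤ 1 := (div_le_one hD).mpr (by linarith)
  have hxK : (1 - t) • x + t • (y + K) = x + K := by
    simp only [smul_eq_mul, t]; field_simp; ring
  have hy : t • x + (1 - t) • (y + K) = y := by
    simp only [smul_eq_mul, t]; field_simp; ring
  have h₁ := hf.2 hx hyK (sub_nonneg.mpr ht1) ht0 (sub_add_cancel 1 t)
  have h₂ := hf.2 hx hyK ht0 (sub_nonneg.mpr ht1) (add_sub_cancel t 1)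
  rw [hxK] at h₁
  rw [hy] at h₂
  simp only [smul_eq_mul] at h₁ h₂
  linarith

namespace Real

theorem Gamma_add_mul_Gamma_le_Gamma_mul_Gamma_add {u v K : ℝ} (hu : 0 < u) (huv : u ≤ v)
    (hK : 0 ≤ K) : Gamma (u + K) * Gamma v ≤ Gamma u * Gamma (v + K) := by
  have hv : 0 < v := hu.trans_le huv
  have hlog := convexOn_log_Gamma.map_add_add_map_le (mem_Ioi.mpr hu)
    (mem_Ioi.mpr (by linarith : 0 < v + K)) huv hK
  simp only [Function.comp_apply] at hlog
  have := Gamma_pos_of_pos hu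
  have := Gamma_pos_of_pos hv
  have := Gamma_pos_of_pos (by linarith : 0 < u + K)
  have := Gamma_pos_of_pos (by linarith : 0 < v + K)
  rwa [← log_le_log_iff (by positivity) (by positivity), log_mul (by positivity) (by positivity),
    log_mul (by positivity) (by positivity)]

theorem Gamma_add_two {s : ℝ} (hs : s ≠ 0) (hs₁ : s + 1 ≠ 0) :
    Gamma (s + 2) = s * (s + 1) * Gamma s := by
  rw [show s + 2 = s + 1 + 1 by ring, Gamma_add_one hs₁, Gamma_add_one hs]
  ring

end Real

theorem gamma_ratio_ineq (n : ℕ) (hn : 3 ≤ n) (q a : ℝ) (hq1 : 1 < q)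
    (hq2 : q < n / ((n : ℝ) - 2)) (ha : a = (n : ℝ) - q * ((n : ℝ) - 2)) (k : ℕ) :
    Real.Gamma (a / ((n : ℝ) - 2) + 2 * (k : ℝ) / ((n : ℝ) - 2)) /
        Real.Gamma (2 * ((k : ℝ) + (n : ℝ) - 1) / ((n : ℝ) - 2)) ≤
      (Real.Gamma (2 + a / ((n : ℝ) - 2)) / Real.Gamma (2 + 2 / ((n : ℝ) - 2))) *
        (1 / ((a + 2 * (k : ℝ)) / ((n : ℝ) - 2) * ((a + 2 * (k : ℝ)) / ((n : ℝ) - 2) + 1))) := by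
  have hn' : (3 : ℝ) ≤ n := by exact_mod_cast hn
  set d : ℝ := (n : ℝ) - 2
  have hd : 0 < d := by linarith
  have ha0 : 0 < a := by rw [ha]; linarith [(lt_div_iff₀ hd).mp hq2]
  have ha2 : a ≤ 2 := by rw [ha]; nlinarith
  set s := (a + 2 * (k : ℝ)) / d
  have hs : 0 < s := by positivity
  have hcheb := Gamma_add_mul_Gamma_le_Gamma_mul_Gamma_add (u := 2 + a / d) (v := 2 + 2 / d)
    (K := 2 * k / d) (by positivity) (by gcongr) (by positivity)
  rw [show 2 + a / d + 2 * k / d = s + 2 by ring,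
    Gamma_add_two hs.ne' (by positivity : s + 1 ≠ 0)] at hcheb
  have hΓ : 0 < Gamma (2 + 2 / d) := Gamma_pos_of_pos (by positivity)
  have hΓK : 0 < Gamma (2 + 2 / d + 2 * k / d) := Gamma_pos_of_pos (by positivity)
  rw [show a / d + 2 * k / d = s by ring,
    show 2 * (k + n - 1) / d = 2 + 2 / d + 2 * k / d by field_simp; ring,
    div_mul_div_comm, mul_one, div_le_div_iff₀ hΓK (by positivity)]
  linarith
end
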